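/- Let 𝐂 be a premulticategory, t : Γ,A₁,…,Aₙ,Γ' → B a multimap, uᵢ : Aᵢ¹,…,Aᵢ^{kᵢ} → Aᵢ (1 ≤ i ≤ n) and vᵢʲ : Δᵢʲ → Aᵢʲ (1 ≤ i ≤ n, 1 ≤ j ≤ kᵢ) multimaps, and suppose all the uᵢ and all the vᵢʲ are central. Then t⟨Γ, u₁⟨v₁¹,…,v₁^{k₁}⟩, …, uₙ⟨vₙ¹,…,vₙ^{kₙ}⟩, Γ'⟩ = t⟨Γ,u₁,…,uₙ,Γ'⟩⟨Γ, v₁¹,…,v₁^{k₁},…,vₙ¹,…,vₙ^{kₙ}, Γ'⟩. -/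

import Mathlib

universe u v

/-- A premulticategory (Staton–Levy): objects, multimaps indexed by a list of sources and a
target, identities, and a one-at-a-time substitution operation satisfying unit and
associativity laws. -/
structure PreMulticat : Type (max (u + 1) (v + 1)) where
  Obj : Type u
  Hom : List Obj → Obj → Type v
  id : ∀ A : Obj, Hom [A] A
  subst : ∀ (Γ : List Obj) (A : Obj) (Γ' : List Obj) {B : Obj},
      Hom (Γ ++ (A :: Γ')) B → ∀ {Δ : List Obj}, Hom Δ A → Hom (Γ ++ (Δ ++ Γ')) B
  id_subst : ∀ {A : Obj} {Δ : List Obj} (u : Hom Δ A),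
      subst [] A [] (id A) u
        = _root_.cast (congrArg (fun l => Hom l A) (List.append_nil Δ).symm) u
  subst_id : ∀ (Γ : List Obj) (A : Obj) (Γ' : List Obj) {B : Obj}
      (t : Hom (Γ ++ (A :: Γ')) B), subst Γ A Γ' t (id A) = t
  subst_assoc : ∀ (Γ₁ : List Obj) (B : Obj) (Γ₁' : List Obj) {C : Obj}
      (t : Hom (Γ₁ ++ (B :: Γ₁')) C) (Γ₂ : List Obj) (A : Obj) (Γ₂' : List Obj)
      (u : Hom (Γ₂ ++ (A :: Γ₂')) B) {Δ : List Obj} (v : Hom Δ A),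
      subst (Γ₁ ++ Γ₂) A (Γ₂' ++ Γ₁')
          (_root_.cast (congrArg (fun l => Hom l C) (by simp)) (subst Γ₁ B Γ₁' t u)) v
        = _root_.cast (congrArg (fun l => Hom l C) (by simp))
            (subst Γ₁ B Γ₁' t (subst Γ₂ A Γ₂' u v))

namespace PreMulticat

variable (M : PreMulticat.{u, v})

/-- Transport of a multimap along an equality of contexts. -/
def cst {Γ Γ' : List M.Obj} {B : M.Obj} (h : Γ = Γ') (t : M.Hom Γ B) : M.Hom Γ' B :=
  _root_.cast (congrArg (fun l => M.Hom l B) h) t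

/-- A multimap `u : Γ → A` is central if substituting it and any other multimap into any third
multimap can be done in either order (in both relative positions). -/
def Central {Γ : List M.Obj} {A : M.Obj} (u : M.Hom Γ A) : Prop :=
  (∀ (Δ₁ Δ₂ Δ₃ : List M.Obj) (B : M.Obj) {C : M.Obj}
      (t : M.Hom (Δ₁ ++ (A :: (Δ₂ ++ (B :: Δ₃)))) C) (Λ : List M.Obj) (v : M.Hom Λ B),
      M.cst (by simp)
          (M.subst (Δ₁ ++ (Γ ++ Δ₂)) B Δ₃
            (M.cst (by simp) (M.subst Δ₁ A (Δ₂ ++ (B :: Δ₃)) t u)) v)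
        = M.subst Δ₁ A (Δ₂ ++ (Λ ++ Δ₃))
            (M.cst (by simp) (M.subst (Δ₁ ++ (A :: Δ₂)) B Δ₃ (M.cst (by simp) t) v)) u)
  ∧ (∀ (Δ₁ Δ₂ Δ₃ : List M.Obj) (B : M.Obj) {C : M.Obj}
      (t' : M.Hom (Δ₁ ++ (B :: (Δ₂ ++ (A :: Δ₃)))) C) (Λ : List M.Obj) (v : M.Hom Λ B),
      M.cst (by simp)
          (M.subst Δ₁ B (Δ₂ ++ (Γ ++ Δ₃))
            (M.cst (by simp) (M.subst (Δ₁ ++ (B :: Δ₂)) A Δ₃ (M.cst (by simp) t') u)) v)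
        = M.subst (Δ₁ ++ (Λ ++ Δ₂)) A Δ₃
            (M.cst (by simp) (M.subst Δ₁ B (Δ₂ ++ (A :: Δ₃)) (M.cst (by simp) t') v)) u)

end PreMulticat

namespace PreMulticat

variable (M : PreMulticat.{u, v})

/-- The data of a single substitution: a multimap `hom : src → tgt` to be plugged in. -/
structure Sub : Type (max u v) where
  tgt : M.Obj
  src : List M.Obj
  hom : M.Hom src tgt

variable {M}

/-- The context `A₁,…,Aₙ,Γ'` of targets of a list of substitutions, followed by `Γ'`. -/
def objCtx : List M.Sub → List M.Obj → List M.Obj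
  | [], Γ' => Γ'
  | s :: L, Γ' => s.tgt :: objCtx L Γ'

/-- The context `Δ₁,…,Δₙ,Γ'` of sources of a list of substitutions, followed by `Γ'`. -/
def newCtx : List M.Sub → List M.Obj → List M.Obj
  | [], Γ' => Γ'
  | s :: L, Γ' => s.src ++ newCtx L Γ'

@[simp] theorem objCtx_nil (Γ' : List M.Obj) : objCtx ([] : List M.Sub) Γ' = Γ' := rfl

@[simp] theorem objCtx_cons (s : M.Sub) (L : List M.Sub) (Γ' : List M.Obj) :
    objCtx (s :: L) Γ' = s.tgt :: objCtx L Γ' := rfl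

@[simp] theorem newCtx_nil (Γ' : List M.Obj) : newCtx ([] : List M.Sub) Γ' = Γ' := rfl

@[simp] theorem newCtx_cons (s : M.Sub) (L : List M.Sub) (Γ' : List M.Obj) :
    newCtx (s :: L) Γ' = s.src ++ newCtx L Γ' := rfl

@[simp] theorem objCtx_eq (L : List M.Sub) (Γ' : List M.Obj) :
    objCtx L Γ' = L.map Sub.tgt ++ Γ' := by
  induction L with
  | nil => rfl
  | cons s L ih => simp [ih]

@[simp] theorem newCtx_eq (L : List M.Sub) (Γ' : List M.Obj) :
    newCtx L Γ' = (L.map Sub.src).flatten ++ Γ' := by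
  induction L with
  | nil => rfl
  | cons s L ih => simp [ih]

/-- Iterated substitution `t⟨Γ, u₁, …, uₙ, Γ'⟩`, defined recursively by substituting the last
multimap of the list `L` (the paper's recursion): `t⟨Γ,u₁,Γ'⟩ = t[Γ,u₁,Γ']` and
`t⟨Γ,u₁,…,uₙ,Γ'⟩ = t⟨Γ,u₁,…,u_{n-1},Aₙ,Γ'⟩[Γ,Δ₁,…,Δ_{n-1},uₙ,Γ']`. -/
def isub (Γ : List M.Obj) (L : List M.Sub) :
    ∀ (Γ' : List M.Obj) {B : M.Obj}, M.Hom (Γ ++ objCtx L Γ') B → M.Hom (Γ ++ newCtx L Γ') B :=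
  L.reverseRecOn (motive := fun L => ∀ (Γ' : List M.Obj) {B : M.Obj},
      M.Hom (Γ ++ objCtx L Γ') B → M.Hom (Γ ++ newCtx L Γ') B)
    (fun _ _ t => t)
    (fun L s ih Γ' _ t =>
      M.cst (by simp)
        (M.subst (Γ ++ newCtx L []) s.tgt Γ'
          (M.cst (by simp) (ih (s.tgt :: Γ') (M.cst (by simp) t))) s.hom))

end PreMulticat

namespace PreMulticat

/-- The data of a grouped substitution: a multimap `hom : A¹,…,Aᵏ → tgt` together with a
further list `inner` of substitutions `vʲ : Δʲ → Aʲ` into its sources. -/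
structure GSub (M : PreMulticat.{u, v}) : Type (max u v) where
  tgt : M.Obj
  inner : List M.Sub
  hom : M.Hom (objCtx inner []) tgt

/-- The substitution datum `(tgt, u)` given by the multimap of a group. -/
def GSub.toOuter {M : PreMulticat.{u, v}} (g : M.GSub) : M.Sub :=
  ⟨g.tgt, objCtx g.inner [], g.hom⟩

/-- The substitution datum `(tgt, u⟨v¹,…,vᵏ⟩)` given by the iterated substitution of the inner
substitutions into the multimap of a group. -/
def GSub.toCollapsed {M : PreMulticat.{u, v}} (g : M.GSub) : M.Sub :=
  ⟨g.tgt, newCtx g.inner [], isub [] g.inner [] g.hom⟩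

@[simp] theorem GSub.toOuter_tgt {M : PreMulticat.{u, v}} (g : M.GSub) :
    g.toOuter.tgt = g.tgt := rfl
@[simp] theorem GSub.toOuter_src {M : PreMulticat.{u, v}} (g : M.GSub) :
    g.toOuter.src = objCtx g.inner [] := rfl
@[simp] theorem GSub.toCollapsed_tgt {M : PreMulticat.{u, v}} (g : M.GSub) :
    g.toCollapsed.tgt = g.tgt := rfl
@[simp] theorem GSub.toCollapsed_src {M : PreMulticat.{u, v}} (g : M.GSub) :
    g.toCollapsed.src = newCtx g.inner [] := rfl

end PreMulticat


namespace PreMulticat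

variable {M : PreMulticat.{u, v}}

theorem cst_heq {Γ Γ' : List M.Obj} {B : M.Obj} (h : Γ = Γ') (t : M.Hom Γ B) :
    HEq (M.cst h t) t := cast_heq _ _

theorem subst_hcongr {Γ₁ Γ₂ : List M.Obj} {A₁ A₂ : M.Obj} {Γ₁' Γ₂' : List M.Obj} {B : M.Obj}
    {t₁ : M.Hom (Γ₁ ++ (A₁ :: Γ₁')) B} {t₂ : M.Hom (Γ₂ ++ (A₂ :: Γ₂')) B}
    {Δ₁ Δ₂ : List M.Obj} {u₁ : M.Hom Δ₁ A₁} {u₂ : M.Hom Δ₂ A₂}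
    (hΓ : Γ₁ = Γ₂) (hA : A₁ = A₂) (hΓ' : Γ₁' = Γ₂') (hΔ : Δ₁ = Δ₂)
    (ht : HEq t₁ t₂) (hu : HEq u₁ u₂) :
    HEq (M.subst Γ₁ A₁ Γ₁' t₁ u₁) (M.subst Γ₂ A₂ Γ₂' t₂ u₂) := by
  subst hΓ hA hΓ' hΔ; cases ht; cases hu; rfl

theorem isub_hcongr {Γ₁ Γ₂ : List M.Obj} {L₁ L₂ : List M.Sub} {Γ₁' Γ₂' : List M.Obj} {B : M.Obj}
    {t₁ : M.Hom (Γ₁ ++ objCtx L₁ Γ₁') B} {t₂ : M.Hom (Γ₂ ++ objCtx L₂ Γ₂') B}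
    (hΓ : Γ₁ = Γ₂) (hL : L₁ = L₂) (hΓ' : Γ₁' = Γ₂') (ht : HEq t₁ t₂) :
    HEq (isub Γ₁ L₁ Γ₁' t₁) (isub Γ₂ L₂ Γ₂' t₂) := by
  subst hΓ hL hΓ'; cases ht; rfl

theorem isub_nil (Γ Γ' : List M.Obj) {B : M.Obj} (t : M.Hom (Γ ++ objCtx ([] : List M.Sub) Γ') B) :
    isub Γ [] Γ' t = t := by
  unfold isub
  erw [List.reverseRecOn_nil]

theorem isub_concat (Γ : List M.Obj) (L : List M.Sub) (s : M.Sub) (Γ' : List M.Obj) {B : M.Obj}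
    (t : M.Hom (Γ ++ objCtx (L ++ [s]) Γ') B) :
    isub Γ (L ++ [s]) Γ' t
      = M.cst (by simp) (M.subst (Γ ++ newCtx L []) s.tgt Γ'
          (M.cst (by simp) (isub Γ L (s.tgt :: Γ') (M.cst (by simp) t))) s.hom) := by
  unfold isub
  erw [List.reverseRecOn_concat]

theorem subst_assoc_heq (Γ₁ : List M.Obj) (B : M.Obj) (Γ₁' : List M.Obj) {C : M.Obj}
    (t : M.Hom (Γ₁ ++ (B :: Γ₁')) C) (Γ₂ : List M.Obj) (A : M.Obj) (Γ₂' : List M.Obj)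
    (u : M.Hom (Γ₂ ++ (A :: Γ₂')) B) {Δ : List M.Obj} (v : M.Hom Δ A)
    (s : M.Hom ((Γ₁ ++ Γ₂) ++ (A :: (Γ₂' ++ Γ₁'))) C) (hs : HEq s (M.subst Γ₁ B Γ₁' t u)) :
    HEq (M.subst (Γ₁ ++ Γ₂) A (Γ₂' ++ Γ₁') s v)
        (M.subst Γ₁ B Γ₁' t (M.subst Γ₂ A Γ₂' u v)) := by
  have hs' : s = _root_.cast (congrArg (fun l => M.Hom l C) (by simp)) (M.subst Γ₁ B Γ₁' t u) :=
    eq_of_heq (hs.trans (cast_heq _ _).symm)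
  rw [hs', M.subst_assoc]
  exact cast_heq _ _

theorem central_right_heq {Γc : List M.Obj} {A : M.Obj} {u : M.Hom Γc A} (hu : M.Central u)
    (Δ₁ Δ₂ Δ₃ : List M.Obj) (B : M.Obj) {C : M.Obj}
    (t' : M.Hom (Δ₁ ++ (B :: (Δ₂ ++ (A :: Δ₃)))) C) (Λ : List M.Obj) (v : M.Hom Λ B)
    (s₁ : M.Hom (Δ₁ ++ (B :: (Δ₂ ++ (Γc ++ Δ₃)))) C)
    (hs₁ : HEq s₁ (M.subst (Δ₁ ++ (B :: Δ₂)) A Δ₃ (M.cst (by simp) t') u))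
    (s₂ : M.Hom ((Δ₁ ++ (Λ ++ Δ₂)) ++ (A :: Δ₃)) C)
    (hs₂ : HEq s₂ (M.subst Δ₁ B (Δ₂ ++ (A :: Δ₃)) t' v)) :
    HEq (M.subst Δ₁ B (Δ₂ ++ (Γc ++ Δ₃)) s₁ v)
        (M.subst (Δ₁ ++ (Λ ++ Δ₂)) A Δ₃ s₂ u) := by
  obtain ⟨_, h2⟩ := hu
  have e := h2 Δ₁ Δ₂ Δ₃ B t' Λ v
  have hs₁' : s₁ = M.cst (by simp) (M.subst (Δ₁ ++ (B :: Δ₂)) A Δ₃ (M.cst (by simp) t') u) :=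
    eq_of_heq (hs₁.trans (cst_heq _ _).symm)
  have hs₂' : s₂ = M.cst (by simp) (M.subst Δ₁ B (Δ₂ ++ (A :: Δ₃)) (M.cst (by simp) t') v) := by
    refine eq_of_heq (hs₂.trans ?_)
    refine HEq.trans ?_ (cst_heq _ _).symm
    exact subst_hcongr rfl rfl rfl rfl (cst_heq _ _).symm (HEq.refl v)
  rw [hs₁', hs₂', ← e]
  exact (cst_heq _ _).symm

theorem isub_append (L₂ : List M.Sub) : ∀ (L₁ : List M.Sub) (Γ Γ' : List M.Obj) {B : M.Obj}
    (t : M.Hom (Γ ++ objCtx (L₁ ++ L₂) Γ') B)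
    (t' : M.Hom (Γ ++ objCtx L₁ (objCtx L₂ Γ')) B), HEq t t' →
    ∀ (s : M.Hom ((Γ ++ newCtx L₁ []) ++ objCtx L₂ Γ') B),
      HEq s (isub Γ L₁ (objCtx L₂ Γ') t') →
    HEq (isub Γ (L₁ ++ L₂) Γ' t) (isub (Γ ++ newCtx L₁ []) L₂ Γ' s) := by
  induction L₂ using List.reverseRecOn with
  | nil =>
    intro L₁ Γ Γ' B t t' ht s hs
    rw [isub_nil]
    refine HEq.trans ?_ hs.symm
    exact isub_hcongr rfl (List.append_nil L₁) rfl ht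
  | append_singleton L₂ p ih =>
    intro L₁ Γ Γ' B t t' ht s hs
    refine HEq.trans (isub_hcongr (t₂ := M.cst (by simp) t) rfl
      (List.append_assoc L₁ L₂ [p]).symm rfl (cst_heq _ _).symm) ?_
    rw [isub_concat, isub_concat]
    refine (cst_heq _ _).trans (HEq.trans ?_ (cst_heq _ _).symm)
    refine subst_hcongr (by simp) rfl rfl rfl ?_ HEq.rfl
    refine (cst_heq _ _).trans (HEq.trans ?_ (cst_heq _ _).symm)
    refine ih L₁ Γ (p.tgt :: Γ') _ (M.cst (by simp) t') ?_ _ ?_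
    · exact ((cst_heq _ _).trans ((cst_heq _ _).trans ht)).trans (cst_heq _ _).symm
    · refine (cst_heq _ _).trans (hs.trans ?_)
      exact isub_hcongr rfl rfl (by simp) (cst_heq _ _).symm

theorem subst_isub (K : List M.Sub) : ∀ (Γ : List M.Obj) (A : M.Obj) (Γ' Θ Θ' : List M.Obj)
    {B : M.Obj} (t : M.Hom (Γ ++ (A :: Γ')) B) (u : M.Hom (Θ ++ objCtx K Θ') A)
    (s : M.Hom ((Γ ++ Θ) ++ objCtx K (Θ' ++ Γ')) B), HEq s (M.subst Γ A Γ' t u) →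
    HEq (M.subst Γ A Γ' t (isub Θ K Θ' u)) (isub (Γ ++ Θ) K (Θ' ++ Γ') s) := by
  induction K using List.reverseRecOn with
  | nil =>
    intro Γ A Γ' Θ Θ' B t u s hs
    refine HEq.trans (subst_hcongr rfl rfl rfl rfl HEq.rfl
      (heq_of_eq (isub_nil Θ Θ' u))) ?_
    rw [isub_nil]
    exact hs.symm
  | append_singleton K p ih =>
    intro Γ A Γ' Θ Θ' B t u s hs
    refine HEq.trans (subst_hcongr rfl rfl rfl (by simp) HEq.rfl
      ((heq_of_eq (isub_concat Θ K p Θ' u)).trans (cst_heq _ _))) ?_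
    rw [isub_concat]
    refine HEq.trans ?_ (cst_heq _ _).symm
    refine HEq.trans (subst_assoc_heq Γ A Γ' t (Θ ++ newCtx K []) p.tgt Θ'
      (M.cst (by simp) (isub Θ K (p.tgt :: Θ') (M.cst (by simp) u))) p.hom
      (M.cst (by simp) (M.subst Γ A Γ' t
        (M.cst (by simp) (isub Θ K (p.tgt :: Θ') (M.cst (by simp) u))))) (cst_heq _ _)).symm ?_
    refine subst_hcongr (by simp) rfl rfl rfl ?_ HEq.rfl
    refine (cst_heq _ _).trans (HEq.trans ?_ (cst_heq _ _).symm)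
    refine HEq.trans (subst_hcongr rfl rfl rfl (by simp) HEq.rfl (cst_heq _ _)) ?_
    refine ih Γ A Γ' Θ (p.tgt :: Θ') t (M.cst (by simp) u) (M.cst (by simp) s) ?_
    refine (cst_heq _ _).trans (hs.trans ?_)
    exact subst_hcongr rfl rfl rfl (by simp) HEq.rfl (cst_heq _ _).symm

theorem isub_subst_central (L : List M.Sub) : ∀ (Γ Θ : List M.Obj) {A : M.Obj} (Γ' : List M.Obj)
    {Λ : List M.Obj} {w : M.Hom Λ A}, M.Central w → ∀ {B : M.Obj}
    (t : M.Hom (Γ ++ objCtx L (Θ ++ (A :: Γ'))) B)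
    (s : M.Hom ((Γ ++ newCtx L Θ) ++ (A :: Γ')) B), HEq s (isub Γ L (Θ ++ (A :: Γ')) t) →
    ∀ (t₂ : M.Hom ((Γ ++ objCtx L Θ) ++ (A :: Γ')) B), HEq t₂ t →
    ∀ (t₃ : M.Hom (Γ ++ objCtx L (Θ ++ (Λ ++ Γ'))) B),
      HEq t₃ (M.subst (Γ ++ objCtx L Θ) A Γ' t₂ w) →
    HEq (M.subst (Γ ++ newCtx L Θ) A Γ' s w) (isub Γ L (Θ ++ (Λ ++ Γ')) t₃) := by
  induction L using List.reverseRecOn with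
  | nil =>
    intro Γ Θ A Γ' Λ w hw B t s hs t₂ ht₂ t₃ ht₃
    refine HEq.trans (subst_hcongr rfl rfl rfl rfl
      ((hs.trans (heq_of_eq (isub_nil Γ (Θ ++ (A :: Γ')) t))).trans ht₂.symm) HEq.rfl) ?_
    rw [isub_nil]
    exact ht₃.symm
  | append_singleton L p ih =>
    intro Γ Θ A Γ' Λ w hw B t s hs t₂ ht₂ t₃ ht₃
    refine HEq.trans (subst_hcongr (Γ₂ := (Γ ++ newCtx L []) ++ (p.src ++ Θ))
      (t₂ := M.cst (by simp) s) (by simp) rfl rfl rfl (cst_heq _ _).symm HEq.rfl) ?_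
    refine HEq.trans (central_right_heq hw (Γ ++ newCtx L []) Θ Γ' p.tgt
      (M.cst (by simp) (isub Γ L (p.tgt :: (Θ ++ (A :: Γ'))) (M.cst (by simp) t)))
      p.src p.hom
      (M.cst (by simp) (M.subst ((Γ ++ newCtx L []) ++ (p.tgt :: Θ)) A Γ'
        (M.cst (by simp) (M.cst (by simp)
          (isub Γ L (p.tgt :: (Θ ++ (A :: Γ'))) (M.cst (by simp) t)))) w))
      (cst_heq _ _)
      (M.cst (by simp) s)
      ?_).symm ?_
    · refine (cst_heq _ _).trans (hs.trans ?_)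
      exact (heq_of_eq (isub_concat Γ L p (Θ ++ (A :: Γ')) t)).trans (cst_heq _ _)
    · rw [isub_concat]
      refine HEq.trans ?_ (cst_heq _ _).symm
      refine subst_hcongr rfl rfl rfl rfl ?_ HEq.rfl
      refine (cst_heq _ _).trans (HEq.trans ?_ (cst_heq _ _).symm)
      refine HEq.trans (subst_hcongr (Γ₂ := Γ ++ newCtx L (p.tgt :: Θ))
        (t₂ := M.cst (by simp) (isub Γ L (p.tgt :: (Θ ++ (A :: Γ'))) (M.cst (by simp) t)))
        (by simp) rfl rfl rfl
        (((cst_heq _ _).trans (cst_heq _ _)).trans (cst_heq _ _).symm) HEq.rfl) ?_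
      refine ih Γ (p.tgt :: Θ) Γ' hw (M.cst (by simp) t) _ (cst_heq _ _)
        (M.cst (by simp) t₂) ((cst_heq _ _).trans (ht₂.trans (cst_heq _ _).symm))
        (M.cst (by simp) t₃) ?_
      refine (cst_heq _ _).trans (ht₃.trans ?_)
      exact subst_hcongr (by simp) rfl rfl rfl (cst_heq _ _).symm HEq.rfl

theorem stmt18_aux (G : List M.GSub) : ∀ (Γ Γ' : List M.Obj) {B : M.Obj},
    (∀ g ∈ G, M.Central g.hom) →
    ∀ (t : M.Hom (Γ ++ objCtx (G.map GSub.toCollapsed) Γ') B)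
      (t' : M.Hom (Γ ++ objCtx (G.map GSub.toOuter) Γ') B), HEq t t' →
    ∀ (s : M.Hom (Γ ++ objCtx ((G.map GSub.inner).flatten) Γ') B),
      HEq s (isub Γ (G.map GSub.toOuter) Γ' t') →
    HEq (isub Γ (G.map GSub.toCollapsed) Γ' t)
        (isub Γ ((G.map GSub.inner).flatten) Γ' s) := by
  induction G using List.reverseRecOn with
  | nil =>
    intro Γ Γ' B _ t t' ht s hs
    show isub Γ [] Γ' t ≍ isub Γ [] Γ' s
    rw [isub_nil, isub_nil]
    exact ht.trans (hs.trans (heq_of_eq (isub_nil Γ Γ' t'))).symm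
  | append_singleton G₀ g ih =>
    intro Γ Γ' B hu t t' ht s hs
    -- Step A: expose the last collapsed substitution
    refine HEq.trans (isub_hcongr (L₂ := G₀.map GSub.toCollapsed ++ [g.toCollapsed])
      (t₂ := M.cst (by simp [Function.comp_def, List.map_flatten, List.flatten_flatten]) t) rfl (by simp [Function.comp_def, List.map_flatten, List.flatten_flatten]) rfl (cst_heq _ _).symm) ?_
    rw [isub_concat]
    refine (cst_heq _ _).trans ?_
    -- Step C: split the collapsed hom u⟨v's⟩ using subst_isub
    refine HEq.trans (subst_isub g.inner (Γ ++ newCtx (G₀.map GSub.toCollapsed) []) g.tgt Γ'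
      [] []
      (M.cst (by simp [Function.comp_def, List.map_flatten, List.flatten_flatten]) (isub Γ (G₀.map GSub.toCollapsed) (g.tgt :: Γ')
        (M.cst (by simp [Function.comp_def, List.map_flatten, List.flatten_flatten]) (M.cst (by simp [Function.comp_def, List.map_flatten, List.flatten_flatten]) t))))
      g.hom
      (M.cst (by simp [Function.comp_def, List.map_flatten, List.flatten_flatten]) (M.subst (Γ ++ newCtx (G₀.map GSub.toCollapsed) []) g.tgt Γ'
        (M.cst (by simp [Function.comp_def, List.map_flatten, List.flatten_flatten]) (isub Γ (G₀.map GSub.toCollapsed) (g.tgt :: Γ')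
          (M.cst (by simp [Function.comp_def, List.map_flatten, List.flatten_flatten]) (M.cst (by simp [Function.comp_def, List.map_flatten, List.flatten_flatten]) t)))) g.hom))
      (cst_heq _ _)) ?_
    -- Step D: rewrite the RHS using isub_append
    refine HEq.trans ?_ (isub_hcongr (L₂ := (G₀.map GSub.inner).flatten ++ g.inner)
      (t₂ := M.cst (by simp [Function.comp_def, List.map_flatten, List.flatten_flatten]) s)
      rfl (by simp [Function.comp_def, List.map_flatten, List.flatten_flatten]) rfl (cst_heq _ _).symm).symm
    refine HEq.trans ?_ (isub_append g.inner ((G₀.map GSub.inner).flatten) Γ Γ' _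
      (M.cst (by simp [Function.comp_def, List.map_flatten, List.flatten_flatten]) s)
      ((cst_heq _ _).trans (cst_heq _ _).symm)
      (M.cst (by simp [Function.comp_def, List.map_flatten, List.flatten_flatten]) (isub Γ ((G₀.map GSub.inner).flatten) (objCtx g.inner Γ')
        (M.cst (by simp [Function.comp_def, List.map_flatten, List.flatten_flatten]) s)))
      (cst_heq _ _)).symm
    refine isub_hcongr (by simp [Function.comp_def, List.map_flatten, List.flatten_flatten])
      rfl rfl ?_
    refine (cst_heq _ _).trans (HEq.trans ?_ (cst_heq _ _).symm)
    -- goal: subst of the collapsed-iterated term ≍ isub FG of (cst s)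
    -- replace the inner iterated collapsed subst via the induction hypothesis
    refine HEq.trans (subst_hcongr
      (Γ₂ := Γ ++ newCtx ((G₀.map GSub.inner).flatten) [])
      (t₂ := M.cst (by simp [Function.comp_def, List.map_flatten, List.flatten_flatten])
        (isub Γ ((G₀.map GSub.inner).flatten) (g.tgt :: Γ')
          (M.cst (by simp [Function.comp_def, List.map_flatten, List.flatten_flatten])
            (isub Γ (G₀.map GSub.toOuter) (g.tgt :: Γ')
              (M.cst (by simp [Function.comp_def, List.map_flatten, List.flatten_flatten]) t')))))
      (by simp [Function.comp_def, List.map_flatten, List.flatten_flatten]) rfl rfl rfl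
      ?_ HEq.rfl) ?_
    · -- HEq Xc Sy, via the induction hypothesis
      refine (cst_heq _ _).trans (HEq.trans ?_ (cst_heq _ _).symm)
      refine ih Γ (g.tgt :: Γ') (fun g' hg' => hu g' (by simp [hg'])) _
        (M.cst (by simp [Function.comp_def, List.map_flatten, List.flatten_flatten]) t') ?_ _ (cst_heq _ _)
      exact ((cst_heq _ _).trans ((cst_heq _ _).trans ht)).trans (cst_heq _ _).symm
    -- Step E: push the central map g.hom through the isub of the inner flattened subs
    refine HEq.trans (isub_subst_central ((G₀.map GSub.inner).flatten) Γ [] Γ'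
      (hu g (by simp [Function.comp_def, List.map_flatten, List.flatten_flatten])) _ _ (cst_heq _ _)
      (t₂ := M.cst (by simp [Function.comp_def, List.map_flatten, List.flatten_flatten]) (isub Γ (G₀.map GSub.toOuter) (g.tgt :: Γ')
        (M.cst (by simp [Function.comp_def, List.map_flatten, List.flatten_flatten]) t')))
      ((cst_heq _ _).trans (cst_heq _ _).symm)
      (t₃ := M.cst (by simp [Function.comp_def, List.map_flatten, List.flatten_flatten])
        (M.subst (Γ ++ objCtx ((G₀.map GSub.inner).flatten) []) g.tgt Γ'
          (M.cst (by simp [Function.comp_def, List.map_flatten, List.flatten_flatten]) (isub Γ (G₀.map GSub.toOuter) (g.tgt :: Γ')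
            (M.cst (by simp [Function.comp_def, List.map_flatten, List.flatten_flatten]) t'))) g.hom))
      (cst_heq _ _)) ?_
    refine isub_hcongr rfl rfl (by simp [Function.comp_def, List.map_flatten, List.flatten_flatten]) ?_
    refine (cst_heq _ _).trans (HEq.trans ?_ ((cst_heq _ _).trans hs).symm)
    -- goal: subst (Γ ++ objCtx FG []) g.tgt Γ' t₂R g.hom ≍ isub Γ ((G₀++[g]).map toOuter) Γ' t'
    refine HEq.trans ?_ (isub_hcongr (L₂ := G₀.map GSub.toOuter ++ [g.toOuter])
      (t₂ := M.cst (by simp [Function.comp_def, List.map_flatten, List.flatten_flatten]) t') rfl (by simp [Function.comp_def, List.map_flatten, List.flatten_flatten]) rfl (cst_heq _ _).symm).symm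
    rw [isub_concat]
    refine HEq.trans ?_ (cst_heq _ _).symm
    refine subst_hcongr (by simp [Function.comp_def, List.map_flatten, List.flatten_flatten])
      rfl rfl rfl ?_ HEq.rfl
    refine ((cst_heq _ _).trans ?_).trans (cst_heq _ _).symm
    exact isub_hcongr rfl rfl rfl
      ((cst_heq _ _).trans ((cst_heq _ _).trans (cst_heq _ _)).symm)

end PreMulticat

open PreMulticat in
/-- for `t : Γ,A₁,…,Aₙ,Γ' → B`, `uᵢ : Aᵢ¹,…,Aᵢ^{kᵢ} → Aᵢ` and `vᵢʲ : Δᵢʲ → Aᵢʲ`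
(each `uᵢ` with its list of `vᵢʲ`'s recorded as a group in the list `G`), with all the `uᵢ`
and all the `vᵢʲ` central,
`t⟨Γ, u₁⟨v₁¹,…⟩, …, uₙ⟨vₙ¹,…⟩, Γ'⟩ = t⟨Γ,u₁,…,uₙ,Γ'⟩⟨Γ, v₁¹,…,v₁^{k₁},…,vₙ^{kₙ}, Γ'⟩`. -/
theorem stmt_18 (M : PreMulticat.{u, v}) (Γ Γ' : List M.Obj) (G : List M.GSub) {B : M.Obj}
    (t : M.Hom (Γ ++ objCtx (G.map GSub.toOuter) Γ') B)
    (hu : ∀ g ∈ G, M.Central g.hom)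
    (hv : ∀ g ∈ G, ∀ s ∈ g.inner, M.Central s.hom) :
    isub Γ (G.map GSub.toCollapsed) Γ' (M.cst (by simp [Function.comp_def]) t)
      = M.cst (by simp [Function.comp_def, List.map_flatten, List.flatten_flatten])
          (isub Γ ((G.map GSub.inner).flatten) Γ'
            (M.cst (by simp [Function.comp_def, List.map_flatten])
              (isub Γ (G.map GSub.toOuter) Γ' t))) := by
  refine eq_of_heq (HEq.trans (stmt18_aux G Γ Γ' hu _ t (cst_heq _ _)
    (M.cst (by simp [Function.comp_def, List.map_flatten])
      (isub Γ (G.map GSub.toOuter) Γ' t)) (cst_heq _ _)) ?_)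
  exact (cst_heq _ _).symm
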